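/- arXiv:2301.10089 — 2 statements merged into one kernel-verified Lean document; each statement's English description precedes it below -/
import Mathlib

section
/- Suppose E ⊂ ℝ^{n+1} is a set of finite perimeter with P(E) ≤ P₀ and |E| = V > 0, satisfying: whenever x ∈ E is such that B_{ρ/2}(x) ⊄ E, one has P(E, B_ρ(x)) ≥ c ρⁿ. Then for ρ small enough (depending on c, P₀, V, n), there exists a point x ∈ E with B_{ρ/2}(x) ⊂ E, i.e., E contains a ball of radius ρ/2. -/
open MeasureTheory Metric Set
open scoped symmDiff RealInnerProductSpace ENNReal

/-- Euclidean space `ℝ^{n+1}`. -/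
abbrev Euc (n : ℕ) := EuclideanSpace ℝ (Fin (n + 1))

-- The signed distance function of a set: negative inside, positive outside.
open scoped Classical in
noncomputable def sdist {n : ℕ} (E : Set (Euc n)) (x : Euc n) : ℝ :=
  if x ∈ E then -Metric.infDist x (frontier E) else Metric.infDist x (frontier E)

/-- Divergence of a vector field on `ℝ^{n+1}`. -/
noncomputable def vdiv {n : ℕ} (X : Euc n → Euc n) (x : Euc n) : ℝ :=
  ∑ i, fderiv ℝ X x (EuclideanSpace.single i 1) i

/-- The admissible values in the variational definition of the relative perimeter
of `E` in `U`. -/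
def perimSet {n : ℕ} (E U : Set (Euc n)) : Set ℝ :=
  {a | ∃ X : Euc n → Euc n, ContDiff ℝ 1 X ∧ HasCompactSupport X ∧ tsupport X ⊆ U ∧
    (∀ x, ‖X x‖ ≤ 1) ∧ a = ∫ x in E, vdiv X x}

/-- The relative perimeter `P(E, U)`. -/
noncomputable def perimeterIn {n : ℕ} (E U : Set (Euc n)) : ℝ := sSup (perimSet E U)

/-- The perimeter `P(E) = P(E, ℝ^{n+1})`. -/
noncomputable def perimeter {n : ℕ} (E : Set (Euc n)) : ℝ := perimeterIn E Set.univ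

/-- A measurable set has finite perimeter if the variational perimeter is finite. -/
def HasFinitePerimeter {n : ℕ} (E : Set (Euc n)) : Prop :=
  MeasurableSet E ∧ BddAbove (perimSet E Set.univ)

/-- The Almgren–Taylor–Wang type functional `𝓕_h(E, F) = P(E) + (1/h) ∫_E d̄_F`. -/
noncomputable def Fh {n : ℕ} (h : ℝ) (F E : Set (Euc n)) : ℝ :=
  perimeter E + (1 / h) * ∫ x in E, sdist F x

/-- `E` is a minimizer of `𝓕_h(·, F)` under the volume constraint `|E| = |F|`. -/
def IsFhMinimizer {n : ℕ} (h : ℝ) (F E : Set (Euc n)) : Prop :=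
  HasFinitePerimeter E ∧ volume E = volume F ∧
  ∀ G : Set (Euc n), HasFinitePerimeter G → volume G = volume F → Fh h F E ≤ Fh h F G

/-- `H` is the distributional mean curvature of a set whose reduced boundary is `RB`,
with generalized outer unit normal `ν`: for every compactly supported `C¹` vector
field `X`, the integral over `RB` of the tangential divergence of `X` equals the
integral of `H ⟪X, ν⟫` (integrals with respect to `n`-dimensional Hausdorff measure). -/
def IsDistribMeanCurvature {n : ℕ} (RB : Set (Euc n)) (ν : Euc n → Euc n)
    (H : Euc n → ℝ) : Prop :=
  ∀ X : Euc n → Euc n, ContDiff ℝ 1 X → HasCompactSupport X →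
    ∫ x in RB, (vdiv X x - ⟪fderiv ℝ X x (ν x), ν x⟫) ∂(μH[(n : ℝ)]) =
      ∫ x in RB, H x * ⟪X x, ν x⟫ ∂(μH[(n : ℝ)])

/-- `RB` represents the reduced boundary of `E` and `ν` its unit normal, in the sense
that the relative perimeter of `E` in every open set is the `n`-dimensional Hausdorff
measure of `RB` therein. -/
def IsReducedBoundary {n : ℕ} (E RB : Set (Euc n)) (ν : Euc n → Euc n) : Prop :=
  RB ⊆ frontier E ∧ (∀ x ∈ RB, ‖ν x‖ = 1) ∧
  ∀ U : Set (Euc n), IsOpen U → perimeterIn E U = (μH[(n : ℝ)] (RB ∩ U)).toReal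

section AuxiliaryLemmas

lemma vdiv_eq_zero_of_not_mem_tsupport {n : ℕ} {X : Euc n → Euc n} {x : Euc n}
    (hx : x ∉ tsupport X) : vdiv X x = 0 := by
  have h0 : X =ᶠ[nhds x] (fun _ => (0 : Euc n)) := by
    filter_upwards [(isClosed_tsupport X).isOpen_compl.mem_nhds hx] with y hy
    exact image_eq_zero_of_notMem_tsupport hy
  have h1 : fderiv ℝ X x = fderiv ℝ (fun _ => (0 : Euc n)) x := h0.fderiv_eq
  simp [vdiv, h1]

lemma continuous_vdiv {n : ℕ} {X : Euc n → Euc n} (hX : ContDiff ℝ 1 X) :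
    Continuous (vdiv X) := by
  have hF : Continuous (fderiv ℝ X) := hX.continuous_fderiv one_ne_zero
  refine continuous_finset_sum _ fun i _ => ?_
  exact (EuclideanSpace.proj i).continuous.comp (hF.clm_apply continuous_const)

lemma integrable_vdiv {n : ℕ} {X : Euc n → Euc n} (hX : ContDiff ℝ 1 X)
    (hsupp : HasCompactSupport X) : Integrable (vdiv X) := by
  refine (continuous_vdiv hX).integrable_of_hasCompactSupport ?_
  refine hsupp.mono' fun x hx => ?_
  by_contra h
  exact hx (vdiv_eq_zero_of_not_mem_tsupport h)

lemma zero_mem_perimSet {n : ℕ} (E U : Set (Euc n)) : (0 : ℝ) ∈ perimSet E U := by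
  have hts : tsupport (fun _ : Euc n => (0 : Euc n)) = ∅ := by
    simp [tsupport, Function.support]
  refine ⟨fun _ => 0, contDiff_const, ?_, ?_, fun x => by simp, ?_⟩
  · rw [HasCompactSupport, hts]; exact isCompact_empty
  · rw [hts]; exact empty_subset _
  · simp [vdiv]

lemma perimSet_subset_univ {n : ℕ} (E U : Set (Euc n)) :
    perimSet E U ⊆ perimSet E Set.univ := by
  rintro a ⟨X, h1, h2, _, h4, h5⟩
  exact ⟨X, h1, h2, subset_univ _, h4, h5⟩

lemma sum_mem_perimSet {n : ℕ} {ι : Type*} (E : Set (Euc n)) (s : Finset ι)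
    (U : ι → Set (Euc n)) (hdisj : (s : Set ι).Pairwise (Function.onFun Disjoint U))
    (a : ι → ℝ) (ha : ∀ i ∈ s, a i ∈ perimSet E (U i)) :
    (∑ i ∈ s, a i) ∈ perimSet E Set.univ := by
  choose X hX1 hX2 hX3 hX4 hX5 using fun i : s => ha i i.2
  set Y : Euc n → Euc n := fun x => ∑ i : s, X i x with hY
  have hdiffY : ContDiff ℝ 1 Y := ContDiff.sum fun i _ => hX1 i
  have hcs : HasCompactSupport Y := by
    rw [HasCompactSupport]
    have hclosed : IsClosed (⋃ i : s, tsupport (X i)) :=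
      isClosed_iUnion_of_finite fun i => isClosed_tsupport _
    refine IsCompact.of_isClosed_subset (isCompact_iUnion fun i => hX2 i)
      (isClosed_tsupport _) ?_
    refine closure_minimal ?_ hclosed
    intro x hx
    simp only [Function.mem_support, hY] at hx
    by_contra h
    simp only [mem_iUnion, not_exists] at h
    exact hx (Finset.sum_eq_zero fun i _ => image_eq_zero_of_notMem_tsupport (h i))
  have hnorm : ∀ x, ‖Y x‖ ≤ 1 := by
    intro x
    by_cases h : ∃ j : s, X j x ≠ 0
    · obtain ⟨j, hj⟩ := h
      have hYx : Y x = X j x := by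
        rw [hY]
        refine Finset.sum_eq_single j (fun b _ hb => ?_) (by simp)
        by_contra hbx
        have hxUj : x ∈ U j := hX3 j (subset_closure (Function.mem_support.2 hj))
        have hxUb : x ∈ U b := hX3 b (subset_closure (Function.mem_support.2 hbx))
        have hne : (b : ι) ≠ (j : ι) := fun he => hb (Subtype.ext he)
        exact Set.disjoint_left.1 (hdisj b.2 j.2 hne) hxUb hxUj
      rw [hYx]; exact hX4 j x
    · push_neg at h
      have hYx : Y x = 0 := Finset.sum_eq_zero fun i _ => h i
      rw [hYx]; simp
  have hint : ∀ i : s, IntegrableOn (vdiv (X i)) E := fun i =>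
    (integrable_vdiv (hX1 i) (hX2 i)).integrableOn
  have hvY : ∀ x, vdiv Y x = ∑ i : s, vdiv (X i) x := by
    intro x
    have hf : fderiv ℝ Y x = ∑ i : s, fderiv ℝ (X i) x :=
      fderiv_fun_sum fun i _ => ((hX1 i).differentiable one_ne_zero).differentiableAt
    calc vdiv Y x
        = ∑ j, (∑ i : s, fderiv ℝ (X i) x) (EuclideanSpace.single j 1) j := by
          rw [vdiv, hf]
      _ = ∑ j, ∑ i : s, (fderiv ℝ (X i) x (EuclideanSpace.single j 1)) j := by
          refine Finset.sum_congr rfl fun j _ => ?_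
          rw [ContinuousLinearMap.sum_apply]
          exact map_sum (EuclideanSpace.proj (𝕜 := ℝ) j)
            (fun i : s => fderiv ℝ (X i) x (EuclideanSpace.single j 1)) Finset.univ
      _ = ∑ i : s, vdiv (X i) x := by
          rw [Finset.sum_comm]; rfl
  refine ⟨Y, hdiffY, hcs, subset_univ _, hnorm, ?_⟩
  have hI : ∫ x in E, vdiv Y x = ∑ i : s, ∫ x in E, vdiv (X i) x := by
    simp_rw [hvY]
    exact integral_finset_sum _ fun i _ => hint i
  have h2 : ∑ i : s, ∫ x in E, vdiv (X i) x = ∑ i : s, a i :=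
    Finset.sum_congr rfl fun i _ => (hX5 i).symm
  rw [hI, h2, Finset.sum_coe_sort]

lemma sum_perimeterIn_le {n : ℕ} {ι : Type*} {E : Set (Euc n)}
    (hE : HasFinitePerimeter E) (s : Finset ι) (U : ι → Set (Euc n))
    (hdisj : (s : Set ι).Pairwise (Function.onFun Disjoint U)) :
    ∑ i ∈ s, perimeterIn E (U i) ≤ perimeter E := by
  classical
  refine le_of_forall_pos_le_add fun ε hε => ?_
  set ε' : ℝ := ε / (s.card + 1) with hε'
  have hcard1 : (0 : ℝ) < s.card + 1 := by positivity
  have hε'0 : 0 < ε' := by positivity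
  have key : ∀ i ∈ s, ∃ a ∈ perimSet E (U i), perimeterIn E (U i) - ε' < a := by
    intro i hi
    refine exists_lt_of_lt_csSup ⟨0, zero_mem_perimSet E (U i)⟩ ?_
    simpa [perimeterIn] using sub_lt_self (perimeterIn E (U i)) hε'0
  choose! a ha1 ha2 using key
  have hmem : (∑ i ∈ s, a i) ∈ perimSet E Set.univ :=
    sum_mem_perimSet E s U hdisj a ha1
  have hsum_le : ∑ i ∈ s, a i ≤ perimeter E := le_csSup hE.2 hmem
  have hcardε : (s.card : ℝ) * ε' ≤ ε := by
    rw [hε', mul_div_assoc', div_le_iff₀ hcard1]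
    nlinarith [hε.le]
  calc ∑ i ∈ s, perimeterIn E (U i)
      ≤ ∑ i ∈ s, (a i + ε') := Finset.sum_le_sum fun i hi => by
        have := ha2 i hi; linarith
    _ = (∑ i ∈ s, a i) + s.card * ε' := by
        rw [Finset.sum_add_distrib, Finset.sum_const, nsmul_eq_mul]
    _ ≤ perimeter E + ε := add_le_add hsum_le hcardε

lemma exists_separated {n : ℕ} (E : Set (Euc n)) (r : ℝ) (hr : 0 < r) (k : ℕ)
    (hvol : (k : ℝ≥0∞) * volume (closedBall (0 : Euc n) r) < volume E) :
    ∃ s : Finset (Euc n), s.card = k ∧ ↑s ⊆ E ∧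
      (s : Set (Euc n)).Pairwise fun x y => r < dist x y := by
  classical
  induction k with
  | zero => exact ⟨∅, by simp, by simp, by simp⟩
  | succ k ih =>
    obtain ⟨s, hcard, hsE, hsep⟩ := ih <| lt_of_le_of_lt
      (mul_le_mul_left (by exact_mod_cast Nat.cast_le.2 (Nat.le_succ k)) _) hvol
    have hS : volume (⋃ x ∈ s, closedBall x r) < volume E := by
      calc volume (⋃ x ∈ s, closedBall x r)
          ≤ ∑ x ∈ s, volume (closedBall x r) := measure_biUnion_finset_le _ _
        _ = (k : ℝ≥0∞) * volume (closedBall (0 : Euc n) r) := by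
            simp_rw [fun x : Euc n =>
              MeasureTheory.Measure.addHaar_closedBall_center (volume : Measure (Euc n)) x (r := r)]
            rw [Finset.sum_const, hcard, nsmul_eq_mul]
        _ ≤ ((k + 1 : ℕ) : ℝ≥0∞) * volume (closedBall (0 : Euc n) r) :=
            mul_le_mul_left (by exact_mod_cast Nat.cast_le.2 (Nat.le_succ k)) _
        _ < volume E := hvol
    obtain ⟨y, hyE, hyS⟩ : ∃ y ∈ E, y ∉ ⋃ x ∈ s, closedBall x r := by
      by_contra h
      push_neg at h
      exact absurd (measure_mono fun z hz => h z hz) (not_le.2 hS)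
    have hys : y ∉ s := fun hy => hyS (mem_biUnion hy (mem_closedBall_self hr.le))
    have hfar : ∀ x ∈ s, r < dist y x := by
      intro x hx
      by_contra hle
      exact hyS (mem_biUnion hx (mem_closedBall.2 (not_lt.1 hle)))
    refine ⟨insert y s, ?_, ?_, ?_⟩
    · rw [Finset.card_insert_of_notMem hys, hcard]
    · intro z hz
      rcases Finset.mem_insert.1 (by exact_mod_cast hz) with h | h
      · exact h ▸ hyE
      · exact hsE h
    · rw [Finset.coe_insert]
      haveI : Std.Symm (fun x y : Euc n => r < dist x y) := ⟨fun a b hab => by rwa [dist_comm]⟩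
      exact Set.pairwise_insert_of_symm.2 ⟨hsep, fun x hx _ => hfar x hx⟩

end AuxiliaryLemmas

/-- a set of finite perimeter `E` with `P(E) ≤ P₀`, `|E| = V > 0` and a
uniform lower perimeter-density bound at boundary-touching scales contains a ball of
radius `ρ/2` once `ρ` is small enough (depending on `c, P₀, V, n`). -/
theorem contains_ball_of_density_bound (n : ℕ) (c P₀ V0 : ℝ) (hc : 0 < c)
    (hV : 0 < V0) :
    ∃ ρ₁ > 0, ∀ (E : Set (Euc n)) (ρ : ℝ), HasFinitePerimeter E →
      perimeter E ≤ P₀ → (volume E).toReal = V0 → 0 < ρ → ρ ≤ ρ₁ →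
      (∀ x ∈ E, ¬ Metric.ball x (ρ / 2) ⊆ E →
        c * ρ ^ n ≤ perimeterIn E (Metric.ball x ρ)) →
      ∃ x ∈ E, Metric.ball x (ρ / 2) ⊆ E := by
  classical
  set κ : ℝ≥0∞ := volume (closedBall (0 : Euc n) 1) with hκdef
  have hκ0 : κ ≠ 0 := (measure_closedBall_pos volume 0 one_pos).ne'
  have hκtop : κ ≠ ⊤ := measure_closedBall_lt_top.ne
  set κr : ℝ := κ.toReal with hκrdef
  have hκr : 0 < κr := ENNReal.toReal_pos hκ0 hκtop
  have hmax : (0 : ℝ) ≤ max P₀ 0 := le_max_right _ _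
  set M : ℝ := (max P₀ 0 / c + 1) * 2 ^ (n + 1) * κr with hMdef
  have hM0 : 0 < M := by
    have h1 : 0 ≤ max P₀ 0 / c := div_nonneg hmax hc.le
    have h2 : (0 : ℝ) < 2 ^ (n + 1) := by positivity
    rw [hMdef]
    exact mul_pos (mul_pos (by linarith) h2) hκr
  refine ⟨min 1 (V0 / (2 * M)), lt_min one_pos (by positivity), ?_⟩
  intro E ρ hE hP hVE hρ0 hρ1 hdens
  by_contra hcon
  push_neg at hcon
  have hlow : ∀ x ∈ E, c * ρ ^ n ≤ perimeterIn E (ball x ρ) := fun x hx =>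
    hdens x hx (hcon x hx)
  have hρle1 : ρ ≤ 1 := hρ1.trans (min_le_left _ _)
  have hρle2 : ρ ≤ V0 / (2 * M) := hρ1.trans (min_le_right _ _)
  have hcρ : 0 < c * ρ ^ n := by positivity
  set k : ℕ := ⌊max P₀ 0 / (c * ρ ^ n)⌋₊ + 1 with hkdef
  have hkP : P₀ < (k : ℝ) * (c * ρ ^ n) := by
    have h1 : max P₀ 0 / (c * ρ ^ n) < (k : ℝ) := by
      rw [hkdef]; push_cast; exact Nat.lt_floor_add_one _
    have h2 := (div_lt_iff₀ hcρ).mp h1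
    exact lt_of_le_of_lt (le_max_left _ _) h2
  have hk_le : (k : ℝ) ≤ max P₀ 0 / (c * ρ ^ n) + 1 := by
    have h1 := Nat.floor_le (show (0 : ℝ) ≤ max P₀ 0 / (c * ρ ^ n) from
      div_nonneg hmax hcρ.le)
    rw [hkdef]; push_cast; linarith
  have hpow1 : ρ ^ n ≤ 1 := pow_le_one₀ hρ0.le hρle1
  have hkV : (k : ℝ) * ((2 * ρ) ^ (n + 1) * κr) < V0 := by
    have hA : max P₀ 0 / (c * ρ ^ n) * ρ ^ n = max P₀ 0 / c := by
      field_simp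
    have hexp : (2 * ρ) ^ (n + 1) = 2 ^ (n + 1) * (ρ ^ n * ρ) := by
      ring
    calc (k : ℝ) * ((2 * ρ) ^ (n + 1) * κr)
        ≤ (max P₀ 0 / (c * ρ ^ n) + 1) * ((2 * ρ) ^ (n + 1) * κr) :=
          mul_le_mul_of_nonneg_right hk_le
            (mul_nonneg (by positivity) hκr.le)
      _ = (max P₀ 0 / (c * ρ ^ n) * ρ ^ n + ρ ^ n) * (2 ^ (n + 1) * ρ * κr) := by
          rw [hexp]; ring
      _ = (max P₀ 0 / c + ρ ^ n) * (2 ^ (n + 1) * ρ * κr) := by rw [hA]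
      _ ≤ (max P₀ 0 / c + 1) * (2 ^ (n + 1) * ρ * κr) :=
          mul_le_mul_of_nonneg_right (add_le_add_right hpow1 _)
            (mul_nonneg (by positivity) hκr.le)
      _ = M * ρ := by rw [hMdef]; ring
      _ ≤ M * (V0 / (2 * M)) := mul_le_mul_of_nonneg_left hρle2 hM0.le
      _ = V0 / 2 := by field_simp
      _ < V0 := by linarith
  have hVtop : volume E ≠ ⊤ := by
    intro h
    rw [h, ENNReal.toReal_top] at hVE
    linarith
  have hEvol : volume E = ENNReal.ofReal V0 := by
    rw [← hVE, ENNReal.ofReal_toReal hVtop]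
  have hballvol : volume (closedBall (0 : Euc n) (2 * ρ)) =
      ENNReal.ofReal ((2 * ρ) ^ (n + 1) * κr) := by
    rw [MeasureTheory.Measure.addHaar_closedBall' volume 0
      (by positivity : (0 : ℝ) ≤ 2 * ρ)]
    rw [show Module.finrank ℝ (Euc n) = n + 1 from finrank_euclideanSpace_fin]
    rw [ENNReal.ofReal_mul (by positivity)]
    congr 1
    rw [hκrdef, ENNReal.ofReal_toReal hκtop]
  have hvol : (k : ℝ≥0∞) * volume (closedBall (0 : Euc n) (2 * ρ)) < volume E := by
    rw [hballvol, hEvol]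
    rw [show ((k : ℕ) : ℝ≥0∞) = ENNReal.ofReal (k : ℝ) from
      (ENNReal.ofReal_natCast k).symm]
    rw [← ENNReal.ofReal_mul (by positivity)]
    exact (ENNReal.ofReal_lt_ofReal_iff hV).2 hkV
  obtain ⟨s, hcard, hsE, hsep⟩ := exists_separated E (2 * ρ) (by positivity) k hvol
  have hdisj : (↑s : Set (Euc n)).Pairwise (Function.onFun Disjoint fun x : Euc n => ball x ρ) := by
    intro x hx y hy hxy
    exact ball_disjoint_ball (by linarith [hsep hx hy hxy])
  have hsum : ∑ x ∈ s, perimeterIn E (ball x ρ) ≤ perimeter E :=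
    sum_perimeterIn_le hE s _ hdisj
  have hlb : (k : ℝ) * (c * ρ ^ n) ≤ ∑ x ∈ s, perimeterIn E (ball x ρ) := by
    have h := Finset.card_nsmul_le_sum s (fun x => perimeterIn E (ball x ρ))
      (c * ρ ^ n) (fun x hx => hlow x (hsE hx))
    rwa [hcard, nsmul_eq_mul] at h
  linarith
end

section
/- Each minimizing-movement step satisfies the minimality comparison against the previous set: if E_{k+1} minimizes P(E) + (1/h)∫_E d̄_{E_k} dx under |E| = |E_k|, then P(E_{k+1}) + (1/h)∫_{E_{k+1} Δ E_k}|d̄_{E_k}| dx ≤ P(E_k). In particular P(E_{k+1}) ≤ P(E_k), so the perimeter is nonincreasing along the discrete flow and P(E_k) ≤ P(E₀) for all k. -/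
open MeasureTheory Metric Set
open scoped symmDiff RealInnerProductSpace ENNReal

/-!
Testing the minimality of `E_{k+1}` against the admissible competitor `E_k` gives
`P(E_{k+1}) + (1/h) ∫_{E_{k+1}} d̄ ≤ P(E_k) + (1/h) ∫_{E_k} d̄` with `d̄ = d̄_{E_k}`.
Since `d̄ ≤ 0` on `E_k` and `d̄ ≥ 0` off it, the difference of the two integrals is
`∫_{E_{k+1} Δ E_k} |d̄|`. The only analytic input is that `d̄` is integrable on `E_k`:
a set of finite volume contains no arbitrarily large balls, so `|d̄|` is bounded on it.
-/

section DistanceToFrontier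

variable {E : Type*} [NormedAddCommGroup E] [NormedSpace ℝ E] {s : Set E} {x : E}

theorem Metric.ball_infDist_frontier_subset (hx : x ∈ s) :
    ball x (infDist x (frontier s)) ⊆ s := by
  intro y hy
  have hr : 0 < infDist x (frontier s) := pos_of_mem_ball hy
  have hx_int : x ∈ interior s := by
    by_contra hx'
    exact hr.ne' (infDist_zero_of_mem ⟨subset_closure hx, hx'⟩)
  refine interior_subset ((convex_ball x _).isPreconnected.subset_of_closure_inter_subset
    isOpen_interior ⟨x, mem_ball_self hr, hx_int⟩ ?_ hy)
  rintro z ⟨hz_cl, hz_ball⟩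
  by_contra hz_int
  have hz_fr : z ∈ frontier s := ⟨closure_mono interior_subset hz_cl, hz_int⟩
  exact (infDist_le_dist_of_mem hz_fr).not_gt (mem_ball'.mp hz_ball)

variable [MeasurableSpace E] [BorelSpace E] (μ : Measure E) [μ.IsAddHaarMeasure]

theorem Metric.infDist_frontier_le_of_measure_lt_measure_ball {r : ℝ} (hx : x ∈ s)
    (hs : μ s < μ (ball 0 r)) : infDist x (frontier s) ≤ r := by
  by_contra! hr
  have hball : ball x r ⊆ s := (ball_subset_ball hr.le).trans (ball_infDist_frontier_subset hx)
  exact (measure_mono hball).not_gt (by rwa [Measure.addHaar_ball_center μ x r])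

theorem exists_measure_lt_addHaar_ball [Nontrivial E] [FiniteDimensional ℝ E]
    (hs : μ s < ∞) : ∃ r : ℝ, μ s < μ (ball 0 r) := by
  have hmono : Monotone fun m : ℕ ↦ ball (0 : E) m :=
    fun _ _ hab ↦ ball_subset_ball (by exact_mod_cast hab)
  have hsup : μ s < ⨆ m : ℕ, μ (ball (0 : E) m) := by
    rwa [← hmono.directed_le.measure_iUnion, iUnion_ball_nat,
      measure_univ_of_isAddLeftInvariant]
  obtain ⟨m, hm⟩ := lt_iSup_iff.mp hsup
  exact ⟨m, hm⟩

end DistanceToFrontier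

section SignedDistance

variable {n : ℕ} {F : Set (Euc n)} {x : Euc n}

theorem sdist_of_mem (hx : x ∈ F) : sdist F x = -infDist x (frontier F) := if_pos hx

theorem sdist_of_notMem (hx : x ∉ F) : sdist F x = infDist x (frontier F) := if_neg hx

theorem sdist_nonpos_of_mem (hx : x ∈ F) : sdist F x ≤ 0 := by
  rw [sdist_of_mem hx, neg_nonpos]
  exact infDist_nonneg

theorem sdist_nonneg_of_notMem (hx : x ∉ F) : 0 ≤ sdist F x := by
  rw [sdist_of_notMem hx]
  exact infDist_nonneg

theorem measurable_sdist (hF : MeasurableSet F) : Measurable (sdist F) :=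
  Measurable.ite hF (continuous_infDist_pt _).measurable.neg (continuous_infDist_pt _).measurable

theorem integrableOn_sdist (hF : MeasurableSet F) (hF_fin : volume F < ∞) :
    IntegrableOn (sdist F) F := by
  obtain ⟨r, hr⟩ := exists_measure_lt_addHaar_ball volume hF_fin
  refine Measure.integrableOn_of_bounded (M := r) hF_fin.ne
    (measurable_sdist hF).aestronglyMeasurable ?_
  filter_upwards [ae_restrict_mem hF] with x hx
  rw [Real.norm_eq_abs, sdist_of_mem hx, abs_neg, abs_of_nonneg infDist_nonneg]
  exact infDist_frontier_le_of_measure_lt_measure_ball volume hx hr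

end SignedDistance

section SymmDiff

variable {α : Type*} [MeasurableSpace α] {μ : Measure α} {f : α → ℝ} {s t : Set α}

theorem setIntegral_abs_symmDiff_eq_sub (hs : MeasurableSet s) (ht : MeasurableSet t)
    (hf_nonpos : ∀ x ∈ t, f x ≤ 0) (hf_nonneg : ∀ x ∉ t, 0 ≤ f x)
    (hfs : IntegrableOn f s μ) (hft : IntegrableOn f t μ) :
    ∫ x in s ∆ t, |f x| ∂μ = ∫ x in s, f x ∂μ - ∫ x in t, f x ∂μ := by
  have hst : ∫ x in s \ t, |f x| ∂μ = ∫ x in s \ t, f x ∂μ :=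
    setIntegral_congr_fun (hs.diff ht) fun x hx ↦ abs_of_nonneg (hf_nonneg x hx.2)
  have hts : ∫ x in t \ s, |f x| ∂μ = -∫ x in t \ s, f x ∂μ := by
    rw [← integral_neg]
    exact setIntegral_congr_fun (ht.diff hs) fun x hx ↦ abs_of_nonpos (hf_nonpos x hx.1)
  rw [Set.symmDiff_def, setIntegral_union disjoint_sdiff_sdiff (ht.diff hs)
      (hfs.mono_set sdiff_subset).abs (hft.mono_set sdiff_subset).abs, hst, hts,
    ← integral_inter_add_sdiff ht hfs, ← integral_inter_add_sdiff hs hft, inter_comm]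
  ring

theorem setIntegral_abs_symmDiff_le_sub (hs : MeasurableSet s) (ht : MeasurableSet t)
    (hf_nonpos : ∀ x ∈ t, f x ≤ 0) (hf_nonneg : ∀ x ∉ t, 0 ≤ f x)
    (hft : IntegrableOn f t μ) :
    ∫ x in s ∆ t, |f x| ∂μ ≤ ∫ x in s, f x ∂μ - ∫ x in t, f x ∂μ := by
  by_cases hfs : IntegrableOn f s μ
  · exact (setIntegral_abs_symmDiff_eq_sub hs ht hf_nonpos hf_nonneg hfs hft).le
  -- Otherwise both `∫_{s Δ t} |f|` and `∫_s f` take the junk value `0`.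
  have h_abs : ¬ IntegrableOn (fun x ↦ |f x|) (s ∆ t) μ := by
    intro h_abs
    have hst : IntegrableOn f (s \ t) μ :=
      (h_abs.mono_set (by rw [Set.symmDiff_def]; exact subset_union_left)).congr_fun
        (fun x hx ↦ abs_of_nonneg (hf_nonneg x hx.2)) (hs.diff ht)
    rw [← inter_union_sdiff s t] at hfs
    exact hfs ((hft.mono_set inter_subset_right).union hst)
  rw [integral_undef h_abs, integral_undef hfs, zero_sub, neg_nonneg]
  exact setIntegral_nonpos ht hf_nonpos

end SymmDiff

section MinimizingMovement

variable {n : ℕ} {h : ℝ} {F E : Set (Euc n)}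

theorem IsFhMinimizer.perimeter_add_le (hmin : IsFhMinimizer h F E) (hh : 0 ≤ h)
    (hF : HasFinitePerimeter F) (hF_fin : volume F < ∞) :
    perimeter E + (1 / h) * ∫ x in E ∆ F, |sdist F x| ≤ perimeter F := by
  have hcmp : Fh h F E ≤ Fh h F F := hmin.2.2 F hF rfl
  have hsymm := setIntegral_abs_symmDiff_le_sub (μ := volume) hmin.1.1 hF.1
    (fun _ ↦ sdist_nonpos_of_mem) (fun _ ↦ sdist_nonneg_of_notMem)
    (integrableOn_sdist hF.1 hF_fin)
  unfold Fh at hcmp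
  calc perimeter E + (1 / h) * ∫ x in E ∆ F, |sdist F x|
      ≤ perimeter E + (1 / h) * ((∫ x in E, sdist F x) - ∫ x in F, sdist F x) := by gcongr
    _ ≤ perimeter F := by rw [mul_sub]; linarith

theorem IsFhMinimizer.perimeter_le (hmin : IsFhMinimizer h F E) (hh : 0 ≤ h)
    (hF : HasFinitePerimeter F) (hF_fin : volume F < ∞) : perimeter E ≤ perimeter F :=
  le_of_add_le_of_nonneg_left (hmin.perimeter_add_le hh hF hF_fin)
    (mul_nonneg (by positivity) (integral_nonneg fun _ ↦ abs_nonneg _))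

end MinimizingMovement

theorem discrete_dissipation_inequality_general {n : ℕ} (h : ℝ) (hh0 : 0 < h)
    (E : ℕ → Set (Euc n))
    (hE0bdd : Bornology.IsBounded (E 0)) (hE0fp : HasFinitePerimeter (E 0))
    (hmin : ∀ k : ℕ, IsFhMinimizer h (E k) (E (k + 1))) :
    (∀ k : ℕ, perimeter (E (k + 1)) +
        (1 / h) * ∫ x in (E (k + 1)) ∆ (E k), |sdist (E k) x| ≤ perimeter (E k)) ∧
    (∀ k : ℕ, perimeter (E (k + 1)) ≤ perimeter (E k)) ∧
    (∀ k : ℕ, perimeter (E k) ≤ perimeter (E 0)) := by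
  have hfp : ∀ k, HasFinitePerimeter (E k) := by
    rintro (_ | k)
    exacts [hE0fp, (hmin k).1]
  have hfin : ∀ k, volume (E k) < ∞ := by
    intro k
    induction k with
    | zero => exact hE0bdd.measure_lt_top
    | succ k ih => rwa [(hmin k).2.1]
  have hmono (k : ℕ) : perimeter (E (k + 1)) ≤ perimeter (E k) :=
    (hmin k).perimeter_le hh0.le (hfp k) (hfin k)
  exact ⟨fun k ↦ (hmin k).perimeter_add_le hh0.le (hfp k) (hfin k), hmono,
    fun k ↦ antitone_nat_of_succ_le (f := fun k ↦ perimeter (E k)) hmono k.zero_le⟩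

/-- each minimizing-movement step satisfies
`P(E_{k+1}) + (1/h)∫_{E_{k+1} Δ E_k}|d̄_{E_k}| ≤ P(E_k)`; in particular the perimeter
is nonincreasing along the discrete flow and `P(E_k) ≤ P(E₀)`. -/
theorem discrete_dissipation_inequality {n : ℕ} (h : ℝ) (hh0 : 0 < h) (hh1 : h < 1)
    (E : ℕ → Set (Euc n)) (hE0open : IsOpen (E 0))
    (hE0bdd : Bornology.IsBounded (E 0)) (hE0fp : HasFinitePerimeter (E 0))
    (hmin : ∀ k : ℕ, IsFhMinimizer h (E k) (E (k + 1))) :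
    (∀ k : ℕ, perimeter (E (k + 1)) +
        (1 / h) * ∫ x in (E (k + 1)) ∆ (E k), |sdist (E k) x| ≤ perimeter (E k)) ∧
    (∀ k : ℕ, perimeter (E (k + 1)) ≤ perimeter (E k)) ∧
    (∀ k : ℕ, perimeter (E k) ≤ perimeter (E 0)) :=
  discrete_dissipation_inequality_general h hh0 E hE0bdd hE0fp hmin
end
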